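/- With the definitions below, for every r ≥ R₂ one has c·f(r) + f′(r)·(r·κ(r) + A) ≤ 0, where f′(r) = φ(R₁)·g(R₂) is the (constant) derivative of f on (R₂,∞). -/

import Mathlib

/-- `κ*(r) = κ(r)` if `r·κ(r) ≥ −A`, and `κ*(r) = −A/r` otherwise. -/
noncomputable def kstar (κ : ℝ → ℝ) (A r : ℝ) : ℝ :=
  if -A ≤ r * κ r then κ r else -A / r

/-- `φ(r) = exp(−(2/D²) ∫₀ʳ (u·κ*(u) + A) du)`. -/
noncomputable def phi (κ : ℝ → ℝ) (A D r : ℝ) : ℝ :=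
  Real.exp (-(2 / D ^ 2) * ∫ u in (0:ℝ)..r, (u * kstar κ A u + A))

/-- `Φ(r) = ∫₀ʳ φ(s) ds`. -/
noncomputable def PhiF (κ : ℝ → ℝ) (A D r : ℝ) : ℝ :=
  ∫ s in (0:ℝ)..r, phi κ A D s

/-- `c = D² / (4 ∫₀^{R₂} Φ(s) φ(s)⁻¹ ds)`. -/
noncomputable def cconst (κ : ℝ → ℝ) (A D R₂ : ℝ) : ℝ :=
  D ^ 2 / (4 * ∫ s in (0:ℝ)..R₂, PhiF κ A D s * (phi κ A D s)⁻¹)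

/-- `g(r) = 1 − (2c/D²) ∫₀ʳ Φ(s) φ(s)⁻¹ ds`. -/
noncomputable def gfun (κ : ℝ → ℝ) (A D R₂ r : ℝ) : ℝ :=
  1 - (2 * cconst κ A D R₂ / D ^ 2) * ∫ s in (0:ℝ)..r, PhiF κ A D s * (phi κ A D s)⁻¹

/-- `f(r) = ∫₀ʳ φ(s)·g(s ∧ R₂) ds`. -/
noncomputable def ffun (κ : ℝ → ℝ) (A D R₂ r : ℝ) : ℝ :=
  ∫ s in (0:ℝ)..r, phi κ A D s * gfun κ A D R₂ (min s R₂)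

/-!
`φ` is nonincreasing on `[0, ∞)` and equal to `φ(R₁)` beyond `R₁`, so its primitive `Φ` is concave
with `Φ(s)/s` nonincreasing. Comparing `Φ` with its chord on `[R₁, R₂]` gives
`∫₀^{R₂} Φ/φ ≥ Φ(R₂)(R₂ - R₁)/(2φ(R₁))`, which makes `g(R₂) = 1/2` and, together with `f ≤ Φ` and
`R₂Φ(r) ≤ rΦ(R₂)`, bounds `c·f(r)` by `D²rφ(R₁)/(2R₂(R₂ - R₁))`. The hypothesis on `κ` beyond `R₂`
makes `φ(R₁)(rκ(r) + A)/2` at most the negative of this bound.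
-/

open MeasureTheory intervalIntegral Set

theorem AntitoneOn.mul_integral_le_mul_integral {f : ℝ → ℝ} {s t : ℝ}
    (hf : AntitoneOn f (Icc 0 t)) (hs : 0 ≤ s) (hst : s ≤ t) :
    s * ∫ x in (0:ℝ)..t, f x ≤ t * ∫ x in (0:ℝ)..s, f x := by
  have hfi : ∀ {a b}, 0 ≤ a → a ≤ b → b ≤ t → IntervalIntegrable f volume a b :=
    fun ha hab hbt => (hf.mono (uIcc_of_le hab ▸ Icc_subset_Icc ha hbt)).intervalIntegrable
  have hlow : s * f s ≤ ∫ x in (0:ℝ)..s, f x := by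
    simpa using integral_mono_on hs intervalIntegrable_const (hfi le_rfl hs hst)
      fun x hx => hf ⟨hx.1, hx.2.trans hst⟩ ⟨hs, hst⟩ hx.2
  have hup : ∫ x in s..t, f x ≤ (t - s) * f s := by
    simpa using integral_mono_on hst (hfi hs hst le_rfl) intervalIntegrable_const
      fun x hx => hf ⟨hs, hst⟩ ⟨hs.trans hx.1, hx.2⟩ hx.1
  rw [← integral_add_adjacent_intervals (hfi le_rfl hs hst) (hfi hs hst le_rfl)]
  nlinarith [mul_le_mul_of_nonneg_left hup hs, mul_le_mul_of_nonneg_left hlow (sub_nonneg.2 hst)]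

theorem mul_add_mul_le_neg_mul_of_le {A D R₁ R₂ r k : ℝ} (hA : 0 ≤ A) (hR₂ : 0 < R₂)
    (hR₁₂ : R₁ < R₂) (hr : R₂ ≤ r) (hk : k ≤ -(D ^ 2 / (R₂ * (R₂ - R₁)) + A / R₂)) :
    (r * k + A) * (R₂ * (R₂ - R₁)) ≤ -(D ^ 2 * r) := by
  have hT : 0 < R₂ * (R₂ - R₁) := mul_pos hR₂ (sub_pos.2 hR₁₂)
  have h := mul_le_mul_of_nonneg_right hk (mul_nonneg (hR₂.le.trans hr) hT.le)
  have hexpand : -(D ^ 2 / (R₂ * (R₂ - R₁)) + A / R₂) * (r * (R₂ * (R₂ - R₁)))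
      = -(D ^ 2 * r) - A * r * (R₂ - R₁) := by
    field_simp [(sub_pos.2 hR₁₂).ne']
    ring
  nlinarith [mul_le_mul_of_nonneg_left hr (mul_nonneg hA (sub_pos.2 hR₁₂).le)]

section

variable {κ : ℝ → ℝ} {A D R₁ R₂ : ℝ}

theorem mul_kstar_add_eq_max (hA : 0 ≤ A) {u : ℝ} (hu : 0 ≤ u) :
    u * kstar κ A u + A = max (u * κ u + A) 0 := by
  unfold kstar
  split_ifs with h
  · rw [max_eq_left (by linarith)]
  · have hu0 : u ≠ 0 := by rintro rfl; simp at h; linarith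
    rw [max_eq_right (by linarith), mul_div_cancel₀ _ hu0, neg_add_cancel]

theorem intervalIntegrable_mul_kstar_add (hA : 0 ≤ A) (hκc : ContinuousOn κ (Ici 0))
    {a b : ℝ} (ha : 0 ≤ a) (hb : 0 ≤ b) :
    IntervalIntegrable (fun u => u * kstar κ A u + A) volume a b := by
  have hcont : ContinuousOn (fun u => max (u * κ u + A) 0) (Ici 0) :=
    (continuous_id.max continuous_const).comp_continuousOn
      ((continuousOn_id.mul hκc).add continuousOn_const)
  refine ((hcont.congr fun u hu => mul_kstar_add_eq_max hA hu).mono ?_).intervalIntegrable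
  exact ordConnected_Ici.uIcc_subset ha hb

theorem phi_pos (r : ℝ) : 0 < phi κ A D r := Real.exp_pos _

theorem antitoneOn_phi (hA : 0 ≤ A) (hκc : ContinuousOn κ (Ici 0)) :
    AntitoneOn (phi κ A D) (Ici 0) := by
  intro a ha b hb hab
  have hH : ∫ u in (0:ℝ)..a, (u * kstar κ A u + A) ≤ ∫ u in (0:ℝ)..b, (u * kstar κ A u + A) :=
    integral_mono_interval le_rfl ha hab
      ((ae_restrict_iff' measurableSet_Ioc).2 <| ae_of_all _ fun u hu => by
        show 0 ≤ u * kstar κ A u + A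
        rw [mul_kstar_add_eq_max hA hu.1.le]; exact le_max_right _ _)
      (intervalIntegrable_mul_kstar_add hA hκc le_rfl (ha.trans hab))
  exact Real.exp_le_exp.2 (mul_le_mul_of_nonpos_left hH (neg_nonpos.2 (by positivity)))

theorem phi_eq_of_le {s : ℝ} (hA : 0 ≤ A) (hκc : ContinuousOn κ (Ici 0)) (hR₁ : 0 ≤ R₁)
    (hR₁' : ∀ r, R₁ ≤ r → r * κ r ≤ -A) (hs : R₁ ≤ s) :
    phi κ A D s = phi κ A D R₁ := by
  have hzero : ∫ u in R₁..s, (u * kstar κ A u + A) = 0 := by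
    refine (integral_congr fun u hu => ?_).trans (integral_zero (a := R₁) (b := s))
    rw [uIcc_of_le hs] at hu
    rw [mul_kstar_add_eq_max hA (hR₁.trans hu.1), max_eq_right (by linarith [hR₁' u hu.1])]
  unfold phi
  rw [← integral_add_adjacent_intervals (intervalIntegrable_mul_kstar_add hA hκc le_rfl hR₁)
    (intervalIntegrable_mul_kstar_add hA hκc hR₁ (hR₁.trans hs)), hzero, add_zero]

theorem intervalIntegrable_phi (hA : 0 ≤ A) (hκc : ContinuousOn κ (Ici 0))
    {a b : ℝ} (ha : 0 ≤ a) (hb : 0 ≤ b) : IntervalIntegrable (phi κ A D) volume a b :=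
  ((antitoneOn_phi hA hκc).mono (ordConnected_Ici.uIcc_subset ha hb)).intervalIntegrable

theorem PhiF_pos (hA : 0 ≤ A) (hκc : ContinuousOn κ (Ici 0)) {r : ℝ} (hr : 0 < r) :
    0 < PhiF κ A D r :=
  intervalIntegral_pos_of_pos_on (intervalIntegrable_phi hA hκc le_rfl hr.le)
    (fun s _ => phi_pos s) hr

theorem monotoneOn_PhiF (hA : 0 ≤ A) (hκc : ContinuousOn κ (Ici 0)) :
    MonotoneOn (PhiF κ A D) (Ici 0) := fun _ ha _ _ hab =>
  integral_mono_interval le_rfl ha hab (ae_of_all _ fun s => (phi_pos s).le)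
    (intervalIntegrable_phi hA hκc le_rfl (ha.trans hab))

theorem mul_PhiF_le_mul_PhiF (hA : 0 ≤ A) (hκc : ContinuousOn κ (Ici 0)) {s t : ℝ}
    (hs : 0 ≤ s) (hst : s ≤ t) : s * PhiF κ A D t ≤ t * PhiF κ A D s :=
  ((antitoneOn_phi hA hκc).mono Icc_subset_Ici_self).mul_integral_le_mul_integral hs hst

theorem monotoneOn_PhiF_mul_inv_phi (hA : 0 ≤ A) (hκc : ContinuousOn κ (Ici 0)) :
    MonotoneOn (fun s => PhiF κ A D s * (phi κ A D s)⁻¹) (Ici 0) := fun a ha b hb hab =>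
  mul_le_mul (monotoneOn_PhiF hA hκc ha hb hab)
    (inv_anti₀ (phi_pos b) (antitoneOn_phi hA hκc ha hb hab)) (inv_pos.2 (phi_pos a)).le
    (integral_nonneg hb fun s _ => (phi_pos s).le)

theorem intervalIntegrable_PhiF_mul_inv_phi (hA : 0 ≤ A) (hκc : ContinuousOn κ (Ici 0))
    {a b : ℝ} (ha : 0 ≤ a) (hb : 0 ≤ b) :
    IntervalIntegrable (fun s => PhiF κ A D s * (phi κ A D s)⁻¹) volume a b :=
  ((monotoneOn_PhiF_mul_inv_phi hA hκc).mono
    (ordConnected_Ici.uIcc_subset ha hb)).intervalIntegrable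

theorem PhiF_mul_inv_phi_nonneg {s : ℝ} (hs : 0 ≤ s) : 0 ≤ PhiF κ A D s * (phi κ A D s)⁻¹ :=
  mul_nonneg (integral_nonneg hs fun u _ => (phi_pos u).le) (inv_pos.2 (phi_pos s)).le

theorem PhiF_mul_sub_le_integral (hA : 0 ≤ A) (hκc : ContinuousOn κ (Ici 0)) (hR₁ : 0 < R₁)
    (hR₁' : ∀ r, R₁ ≤ r → r * κ r ≤ -A) (hR₁₂ : R₁ ≤ R₂) :
    PhiF κ A D R₂ * (R₂ - R₁)
      ≤ 2 * phi κ A D R₁ * ∫ s in (0:ℝ)..R₂, PhiF κ A D s * (phi κ A D s)⁻¹ := by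
  set φ₁ := phi κ A D R₁
  set Φ₂ := PhiF κ A D R₂
  have hR₂ : 0 < R₂ := hR₁.trans_le hR₁₂
  have hφ₁ : 0 < φ₁ := phi_pos R₁
  -- on `[R₁, R₂]`, `φ = φ(R₁)` and `Φ` lies above its chord `s ↦ s Φ(R₂) / R₂`
  have hchord : ∀ s ∈ Icc R₁ R₂, Φ₂ / (R₂ * φ₁) * s ≤ PhiF κ A D s * (phi κ A D s)⁻¹ := by
    intro s hs
    have hconc := mul_PhiF_le_mul_PhiF (D := D) hA hκc (hR₁.le.trans hs.1) hs.2
    rw [phi_eq_of_le hA hκc hR₁.le hR₁' hs.1]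
    calc Φ₂ / (R₂ * φ₁) * s = s * Φ₂ / R₂ * φ₁⁻¹ := by ring
      _ ≤ PhiF κ A D s * φ₁⁻¹ := by
        gcongr
        rw [div_le_iff₀ hR₂]
        linarith
  have hseg : Φ₂ / (R₂ * φ₁) * ((R₂ ^ 2 - R₁ ^ 2) / 2)
      ≤ ∫ s in R₁..R₂, PhiF κ A D s * (phi κ A D s)⁻¹ := by
    rw [← integral_id, ← intervalIntegral.integral_const_mul]
    exact integral_mono_on hR₁₂ (by apply Continuous.intervalIntegrable; fun_prop)
      (intervalIntegrable_PhiF_mul_inv_phi hA hκc hR₁.le hR₂.le) hchord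
  have htail : ∫ s in R₁..R₂, PhiF κ A D s * (phi κ A D s)⁻¹
      ≤ ∫ s in (0:ℝ)..R₂, PhiF κ A D s * (phi κ A D s)⁻¹ :=
    integral_mono_interval hR₁.le hR₁₂ le_rfl
      ((ae_restrict_iff' measurableSet_Ioc).2 <| ae_of_all _ fun _ hs =>
        PhiF_mul_inv_phi_nonneg hs.1.le)
      (intervalIntegrable_PhiF_mul_inv_phi hA hκc le_rfl hR₂.le)
  have hR₁₂' : R₂ - R₁ ≤ (R₂ ^ 2 - R₁ ^ 2) / R₂ := by
    rw [le_div_iff₀ hR₂]; nlinarith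
  calc Φ₂ * (R₂ - R₁) ≤ Φ₂ * ((R₂ ^ 2 - R₁ ^ 2) / R₂) :=
        mul_le_mul_of_nonneg_left hR₁₂' (PhiF_pos hA hκc hR₂).le
    _ = 2 * φ₁ * (Φ₂ / (R₂ * φ₁) * ((R₂ ^ 2 - R₁ ^ 2) / 2)) := by field_simp
    _ ≤ _ := by gcongr; exact hseg.trans htail

theorem integral_PhiF_mul_inv_phi_pos (hA : 0 ≤ A) (hκc : ContinuousOn κ (Ici 0))
    (hR₁ : 0 < R₁) (hR₁' : ∀ r, R₁ ≤ r → r * κ r ≤ -A) (hR₁₂ : R₁ < R₂) :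
    0 < ∫ s in (0:ℝ)..R₂, PhiF κ A D s * (phi κ A D s)⁻¹ :=
  pos_of_mul_pos_right
    ((mul_pos (PhiF_pos hA hκc (hR₁.trans hR₁₂)) (sub_pos.2 hR₁₂)).trans_le
      (PhiF_mul_sub_le_integral hA hκc hR₁ hR₁' hR₁₂.le))
    (mul_pos two_pos (phi_pos R₁)).le

theorem gfun_self_eq_half (hD : D ≠ 0)
    (hI : ∫ s in (0:ℝ)..R₂, PhiF κ A D s * (phi κ A D s)⁻¹ ≠ 0) :
    gfun κ A D R₂ R₂ = 1 / 2 := by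
  unfold gfun cconst
  generalize ∫ s in (0:ℝ)..R₂, PhiF κ A D s * (phi κ A D s)⁻¹ = I at hI ⊢
  field_simp
  ring

theorem gfun_zero : gfun κ A D R₂ 0 = 1 := by
  simp [gfun]

theorem antitoneOn_gfun (hA : 0 ≤ A) (hκc : ContinuousOn κ (Ici 0)) (hR₂ : 0 ≤ R₂) :
    AntitoneOn (gfun κ A D R₂) (Ici 0) := by
  intro a ha b _ hab
  have hc : 0 ≤ 2 * cconst κ A D R₂ / D ^ 2 := by
    have : 0 ≤ ∫ s in (0:ℝ)..R₂, PhiF κ A D s * (phi κ A D s)⁻¹ :=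
      integral_nonneg hR₂ fun s hs => PhiF_mul_inv_phi_nonneg hs.1
    unfold cconst
    positivity
  have hQ : ∫ s in (0:ℝ)..a, PhiF κ A D s * (phi κ A D s)⁻¹
      ≤ ∫ s in (0:ℝ)..b, PhiF κ A D s * (phi κ A D s)⁻¹ :=
    integral_mono_interval le_rfl ha hab
      ((ae_restrict_iff' measurableSet_Ioc).2 <| ae_of_all _ fun _ hs =>
        PhiF_mul_inv_phi_nonneg hs.1.le)
      (intervalIntegrable_PhiF_mul_inv_phi hA hκc le_rfl (ha.trans hab))
  unfold gfun
  exact sub_le_sub_left (mul_le_mul_of_nonneg_left hQ hc) 1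

theorem ffun_le_PhiF (hA : 0 ≤ A) (hκc : ContinuousOn κ (Ici 0)) (hR₂ : 0 ≤ R₂)
    (hg : 0 ≤ gfun κ A D R₂ R₂) {r : ℝ} (hr : 0 ≤ r) :
    ffun κ A D R₂ r ≤ PhiF κ A D r := by
  have hg_anti := antitoneOn_gfun (D := D) hA hκc hR₂
  have hmin : ∀ s ∈ Ici (0:ℝ), min s R₂ ∈ Ici 0 := fun s hs => le_min hs hR₂
  have hanti : AntitoneOn (fun s => phi κ A D s * gfun κ A D R₂ (min s R₂)) (Ici 0) :=
    fun a ha b hb hab => mul_le_mul (antitoneOn_phi hA hκc ha hb hab)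
      (hg_anti (hmin a ha) (hmin b hb) (min_le_min_right R₂ hab))
      (hg.trans (hg_anti (hmin b hb) hR₂ (min_le_right _ _))) (phi_pos a).le
  refine integral_mono_on hr
    (hanti.mono (ordConnected_Ici.uIcc_subset le_rfl hr)).intervalIntegrable
    (intervalIntegrable_phi hA hκc le_rfl hr) fun s hs => ?_
  exact mul_le_of_le_one_right (phi_pos s).le
    ((hg_anti self_mem_Ici (hmin s hs.1) (le_min hs.1 hR₂)).trans_eq gfun_zero)

theorem cconst_mul_ffun_mul_le (hA : 0 ≤ A) (hD : D ≠ 0) (hκc : ContinuousOn κ (Ici 0))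
    (hR₁ : 0 < R₁) (hR₁' : ∀ r, R₁ ≤ r → r * κ r ≤ -A) (hR₁₂ : R₁ < R₂) {r : ℝ} (hr : R₂ ≤ r) :
    cconst κ A D R₂ * ffun κ A D R₂ r * (R₂ * (R₂ - R₁)) ≤ D ^ 2 * r * phi κ A D R₁ / 2 := by
  have hR₂ : 0 < R₂ := hR₁.trans hR₁₂
  have hr0 : 0 ≤ r := hR₂.le.trans hr
  set I := ∫ s in (0:ℝ)..R₂, PhiF κ A D s * (phi κ A D s)⁻¹
  have hI : 0 < I := integral_PhiF_mul_inv_phi_pos hA hκc hR₁ hR₁' hR₁₂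
  have hf := ffun_le_PhiF hA hκc hR₂.le (by rw [gfun_self_eq_half hD hI.ne']; norm_num) hr0
  have hΦ : PhiF κ A D r * (R₂ * (R₂ - R₁)) ≤ 2 * r * phi κ A D R₁ * I := by
    have := mul_le_mul_of_nonneg_left
      (PhiF_mul_sub_le_integral (D := D) hA hκc hR₁ hR₁' hR₁₂.le) hr0
    have := mul_le_mul_of_nonneg_right (mul_PhiF_le_mul_PhiF (D := D) hA hκc hR₂.le hr)
      (sub_pos.2 hR₁₂).le
    nlinarith
  calc cconst κ A D R₂ * ffun κ A D R₂ r * (R₂ * (R₂ - R₁))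
      ≤ D ^ 2 / (4 * I) * (PhiF κ A D r * (R₂ * (R₂ - R₁))) := by
        rw [mul_assoc]
        exact mul_le_mul_of_nonneg_left
          (mul_le_mul_of_nonneg_right hf (mul_pos hR₂ (sub_pos.2 hR₁₂)).le)
          (div_pos (by positivity) (by linarith)).le
    _ ≤ D ^ 2 / (4 * I) * (2 * r * phi κ A D R₁ * I) := by gcongr
    _ = D ^ 2 * r * phi κ A D R₁ / 2 := by field_simp; ring

end

theorem cf_plus_fprime_nonpos_beyond_R2_general
    (κ : ℝ → ℝ) (A D R₁ R₂ : ℝ)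
    (hA : 0 ≤ A) (hD : 0 < D)
    (hκc : ContinuousOn κ (Set.Ici 0))
    (hR₁ : 1 ≤ R₁) (hR₁' : ∀ r, R₁ ≤ r → r * κ r ≤ -A)
    (hR₂ : R₁ < R₂)
    (hR₂' : ∀ r, R₂ ≤ r → κ r ≤ -(D ^ 2 / (R₂ * (R₂ - R₁)) + A / R₂)) :
    ∀ r, R₂ ≤ r →
      cconst κ A D R₂ * ffun κ A D R₂ r
        + phi κ A D R₁ * gfun κ A D R₂ R₂ * (r * κ r + A) ≤ 0 := by
  intro r hr
  have hR₁0 : 0 < R₁ := by linarith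
  have hg : gfun κ A D R₂ R₂ = 1 / 2 :=
    gfun_self_eq_half hD.ne' (integral_PhiF_mul_inv_phi_pos hA hκc hR₁0 hR₁' hR₂).ne'
  have hcf := cconst_mul_ffun_mul_le hA hD.ne' hκc hR₁0 hR₁' hR₂ hr
  have hdrift := mul_add_mul_le_neg_mul_of_le hA (hR₁0.trans hR₂) hR₂ hr (hR₂' r hr)
  rw [hg]
  refine nonpos_of_mul_nonpos_left ?_ (mul_pos (hR₁0.trans hR₂) (sub_pos.2 hR₂))
  nlinarith [mul_le_mul_of_nonneg_left hdrift (phi_pos (κ := κ) (A := A) (D := D) R₁).le]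

/-- The estimate (e2:3.30): for every `r ≥ R₂`,
`c·f(r) + f′(r)·(r·κ(r) + A) ≤ 0`, where `f′(r) = φ(R₁)·g(R₂)` is the
constant derivative of `f` on `(R₂,∞)`. -/
theorem cf_plus_fprime_nonpos_beyond_R2
    (κ : ℝ → ℝ) (A D R₁ R₂ : ℝ)
    (hA : 0 ≤ A) (hD : 0 < D)
    (hκc : ContinuousOn κ (Set.Ici 0))
    (hκb : ∃ C, ∀ r, 0 ≤ r → |κ r| ≤ C)
    (hR₁ : 1 ≤ R₁) (hR₁' : ∀ r, R₁ ≤ r → r * κ r ≤ -A)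
    (hR₂ : R₁ < R₂)
    (hR₂' : ∀ r, R₂ ≤ r → κ r ≤ -(D ^ 2 / (R₂ * (R₂ - R₁)) + A / R₂)) :
    ∀ r, R₂ ≤ r →
      cconst κ A D R₂ * ffun κ A D R₂ r
        + phi κ A D R₁ * gfun κ A D R₂ R₂ * (r * κ r + A) ≤ 0 :=
  cf_plus_fprime_nonpos_beyond_R2_general κ A D R₁ R₂ hA hD hκc hR₁ hR₁' hR₂ hR₂'
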